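/- Suppose (A1)–(A3): $T$ is a CEMPT on an infinite $\sigma$-finite space, $0<\mu(Y)<\infty$, $w_n^Y\sim n^{1-\alpha}\ell(n)$ with $\alpha\in(0,1)$ and $\ell$ slowly varying at $\infty$, and $\{(w_n^Y)^{-1}\sum_{k=0}^{n-1}\hat T^k1_{Y_k}\}_{n\ge N}$ is uniformly sweeping for $1_Y$ for some $N$. Let $G\in L^1(\mu)$, $G\ge0$, and assume $1_Y$ is uniformly sweeping for $G$. Then there exists $C_2<\infty$ such that for every positive sequence $c(n)$ with $c(n)\to0$, $nc(n)\to\infty$: $\limsup_{n\to\infty}\frac{\ell(c(n)n)}{c(n)^\alpha\ell(n)}\,\mu_G(Z_n^Y/n\le c(n))\le C_2$. -/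

import Mathlib

open MeasureTheory Filter Real Set
open scoped Topology ENNReal

/-- First return time to `Y` (value `⊤` if the orbit never returns). -/
noncomputable def firstReturn {X : Type*} (T : X → X) (Y : Set X) (x : X) : ℕ∞ :=
  ⨅ (k : ℕ) (_ : 1 ≤ k ∧ T^[k] x ∈ Y), (k : ℕ∞)

/-- The sets `Y₀ = Y`, `Yₙ = Yᶜ ∩ {φ = n}`. -/
noncomputable def Ypart {X : Type*} (T : X → X) (Y : Set X) : ℕ → Set X
  | 0 => Y
  | (n+1) => Yᶜ ∩ {x | firstReturn T Y x = ((n+1 : ℕ) : ℕ∞)}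

/-- The wandering rate `w_n^Y`. -/
noncomputable def wrate {X : Type*} [MeasurableSpace X] (T : X → X) (Y : Set X)
    (μ : Measure X) (n : ℕ) : ℝ≥0∞ :=
  ∑ k ∈ Finset.range n, μ (Y ∩ {x | (k : ℕ∞) < firstReturn T Y x})

/-- The normalized entrance densities `(w_n^Y)⁻¹ ∑_{k<n} T̂^k 1_{Y_k}`. -/
noncomputable def entrance {X : Type*} [MeasurableSpace X] (T : X → X) (Y : Set X)
    (μ : Measure X) (hatT : (X → ℝ≥0∞) → (X → ℝ≥0∞)) (n : ℕ) (x : X) : ℝ≥0∞ :=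
  (∑ k ∈ Finset.range n, (hatT^[k] ((Ypart T Y k).indicator fun _ => (1:ℝ≥0∞))) x) /
    wrate T Y μ n

/-- Last visit time to `Y` up to time `n` (with `max ∅ = 0`). -/
noncomputable def lastVisit {X : Type*} (T : X → X) (Y : Set X) (n : ℕ) (x : X) : ℕ :=
  sSup {k | k ≤ n ∧ T^[k] x ∈ Y}

/-!
Let `M = ⌊c(n) n⌋` and `A = {Z_n ≤ M}`. Since `1_Y` sweeps `G`, `μ_G(A)` is at most a constant
times `∑_{j ≤ K'} μ(Y ∩ T^{-j} A)`. A point of `Y ∩ T^{-j} A` makes its last visit to `Y` up to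
time `j + n` at some time `s ≤ j + M`, and from there it avoids `Y` for more than `n - M` steps,
i.e. it enters `B = Y ∩ {φ > n - M}` at time `s`. Applying (A3) with the entrance density of
level `M + 1` to each last-visit class and counting the resulting disjoint pieces of the orbit
of `B` gives `μ_G(A) ≲ M μ(B) / w_{M+1}`, while `(n - M) μ(B) ≤ w_n`. Hence
`μ_G(A) ≲ M w_n / (n w_{M+1}) ≈ c(n)^α ℓ(n) / ℓ(c(n) n)` by (A2); the comparison of `ℓ(c(n) n)`
with `ℓ(M + 1)` uses that a measurable slowly varying function satisfies `ℓ(t) ≤ e² ℓ(s)` for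
large `t ≤ s ≤ 2t`, proved by a Steinhaus-type argument.
-/

section ReturnTimes

variable {X : Type*} {T : X → X} {Y : Set X}

theorem natCast_lt_firstReturn_iff {a : ℕ} {x : X} :
    (a : ℕ∞) < firstReturn T Y x ↔ ∀ k, 1 ≤ k → k ≤ a → T^[k] x ∉ Y := by
  constructor
  · intro h k hk hka hkY
    have : firstReturn T Y x ≤ k := iInf₂_le k ⟨hk, hkY⟩
    exact (h.trans_le this).not_ge (by exact_mod_cast hka)
  · intro h
    rw [← ENat.add_one_le_iff (ENat.natCast_ne_top a)]
    refine le_iInf₂ fun k hk => ?_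
    have : a < k := lt_of_not_ge fun hka => h k hk.1 hka hk.2
    exact_mod_cast this

theorem measurableSet_natCast_lt_firstReturn [MeasurableSpace X] (hT : Measurable T)
    (hY : MeasurableSet Y) (a : ℕ) : MeasurableSet {x | (a : ℕ∞) < firstReturn T Y x} := by
  have : {x | (a : ℕ∞) < firstReturn T Y x} = ⋂ k ∈ Finset.Icc 1 a, T^[k] ⁻¹' Yᶜ := by
    ext x
    simp [natCast_lt_firstReturn_iff, and_imp]
  rw [this]
  exact Finset.measurableSet_biInter _ fun k _ => hT.iterate k hY.compl

theorem measurableSet_Ypart [MeasurableSpace X] (hT : Measurable T) (hY : MeasurableSet Y) :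
    ∀ k, MeasurableSet (Ypart T Y k)
  | 0 => hY
  | a + 1 => by
    have : {x | firstReturn T Y x = ((a + 1 : ℕ) : ℕ∞)} =
        {x | (a : ℕ∞) < firstReturn T Y x} \ {x | ((a + 1 : ℕ) : ℕ∞) < firstReturn T Y x} := by
      ext x
      simp only [Set.mem_ofPred_eq, Set.mem_sdiff, not_lt,
        ← ENat.add_one_le_iff (ENat.natCast_ne_top a)]
      push_cast
      exact ⟨fun h => ⟨h.ge, h.le⟩, fun h => le_antisymm h.2 h.1⟩
    exact hY.compl.inter (this ▸ (measurableSet_natCast_lt_firstReturn hT hY a).diff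
      (measurableSet_natCast_lt_firstReturn hT hY (a + 1)))

theorem pairwise_disjoint_Ypart : Pairwise (Function.onFun Disjoint (Ypart T Y)) := by
  intro k k' hkk'
  rw [Function.onFun, Set.disjoint_left]
  intro x hx hx'
  match k, k' with
  | 0, 0 => exact hkk' rfl
  | 0, _ + 1 => exact hx'.1 hx
  | _ + 1, 0 => exact hx.1 hx'
  | a + 1, b + 1 => exact hkk' (by exact_mod_cast hx.2.symm.trans hx'.2)

theorem lastVisit_le_iff {n M : ℕ} {x : X} :
    lastVisit T Y n x ≤ M ↔ ∀ k, M < k → k ≤ n → T^[k] x ∉ Y := by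
  have hbdd : BddAbove {k | k ≤ n ∧ T^[k] x ∈ Y} := ⟨n, fun k hk => hk.1⟩
  constructor
  · intro h k hMk hkn hkY
    exact (le_csSup hbdd ⟨hkn, hkY⟩).not_gt (h.trans_lt hMk)
  · intro h
    rcases Set.eq_empty_or_nonempty {k | k ≤ n ∧ T^[k] x ∈ Y} with he | hne
    · simp [lastVisit, he]
    · exact csSup_le hne fun k hk => not_lt.mp fun hMk => h k hMk hk.1 hk.2

theorem measurable_lastVisit [MeasurableSpace X] (hT : Measurable T) (hY : MeasurableSet Y)
    (n : ℕ) : Measurable (lastVisit T Y n) := by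
  refine measurable_of_Iic fun M => ?_
  have : lastVisit T Y n ⁻¹' Iic M = ⋂ k ∈ Finset.Ioc M n, T^[k] ⁻¹' Yᶜ := by
    ext x
    simp [lastVisit_le_iff, and_imp]
  rw [this]
  exact Finset.measurableSet_biInter _ fun k _ => hT.iterate k hY.compl

theorem lastVisit_add_le (j n : ℕ) (x : X) :
    lastVisit T Y (j + n) x ≤ j + lastVisit T Y n (T^[j] x) := by
  refine lastVisit_le_iff.mpr fun k hk hkn hkY => ?_
  refine lastVisit_le_iff.mp (le_refl (lastVisit T Y n (T^[j] x))) (k - j) (by omega)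
    (by omega) ?_
  rwa [← Function.iterate_add_apply, Nat.sub_add_cancel (by omega)]

theorem iterate_lastVisit_mem {L : ℕ} {x : X} (hx : x ∈ Y) :
    T^[lastVisit T Y L x] x ∈
      Y ∩ {y | ((L - lastVisit T Y L x : ℕ) : ℕ∞) < firstReturn T Y y} := by
  set S := {k | k ≤ L ∧ T^[k] x ∈ Y}
  have hbdd : BddAbove S := ⟨L, fun k hk => hk.1⟩
  have hmem : lastVisit T Y L x ∈ S := Nat.sSup_mem ⟨0, Nat.zero_le _, hx⟩ hbdd
  refine ⟨hmem.2, natCast_lt_firstReturn_iff.mpr fun k hk hkL hkY => ?_⟩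
  have : lastVisit T Y L x + k ∈ S := by
    refine ⟨by omega, ?_⟩
    rwa [add_comm, Function.iterate_add_apply]
  have hle : lastVisit T Y L x + k ≤ lastVisit T Y L x := le_csSup hbdd this
  omega

theorem inter_preimage_lastVisit_le_subset (j n M : ℕ) :
    Y ∩ T^[j] ⁻¹' {x | lastVisit T Y n x ≤ M} ⊆
      ⋃ s ∈ Finset.range (j + M + 1), Y ∩ lastVisit T Y (j + n) ⁻¹' {s} := fun x hx =>
  mem_biUnion (Finset.mem_range.mpr (Nat.lt_succ_of_le
    ((lastVisit_add_le j n x).trans (Nat.add_le_add_left hx.2 j)))) ⟨hx.1, rfl⟩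

theorem inter_lastVisit_eq_subset {j n M s : ℕ} (hs : s ≤ j + M) :
    Y ∩ lastVisit T Y (j + n) ⁻¹' {s} ⊆
      T^[s] ⁻¹' (Y ∩ {x | ((n - M : ℕ) : ℕ∞) < firstReturn T Y x}) := by
  intro x hx
  have hmem := iterate_lastVisit_mem (T := T) (L := j + n) hx.1
  rw [show lastVisit T Y (j + n) x = s from hx.2] at hmem
  exact ⟨hmem.1, show ((n - M : ℕ) : ℕ∞) < _ from
    lt_of_le_of_lt (by exact_mod_cast (by omega : n - M ≤ j + n - s)) hmem.2⟩

end ReturnTimes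

section WanderingRate

variable {X : Type*} [MeasurableSpace X] {T : X → X} {Y : Set X} {μ : Measure X}

theorem wrate_mono : Monotone (wrate T Y μ) := fun _ _ h =>
  Finset.sum_le_sum_of_subset (Finset.range_subset_range.mpr h)

theorem natCast_mul_measure_le_wrate (a : ℕ) :
    (a : ℝ≥0∞) * μ (Y ∩ {x | (a : ℕ∞) < firstReturn T Y x}) ≤ wrate T Y μ a := by
  have := Finset.card_nsmul_le_sum (Finset.range a)
    (fun i => μ (Y ∩ {x | (i : ℕ∞) < firstReturn T Y x}))
    (μ (Y ∩ {x | (a : ℕ∞) < firstReturn T Y x})) fun i hi =>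
      measure_mono <| inter_subset_inter_right Y fun x hx =>
        lt_trans (by exact_mod_cast Finset.mem_range.mp hi) (show (a : ℕ∞) < _ from hx)
  simpa [wrate] using this

end WanderingRate

structure IsTransferOperator {X : Type*} [MeasurableSpace X] (μ : Measure X) (T : X → X)
    (hatT : (X → ℝ≥0∞) → (X → ℝ≥0∞)) : Prop where
  measurable : ∀ u, Measurable u → Measurable (hatT u)
  lintegral_comp_mul : ∀ u v : X → ℝ≥0∞, Measurable u → Measurable v →
    ∫⁻ x, v (T x) * u x ∂μ = ∫⁻ x, v x * hatT u x ∂μ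

theorem setLIntegral_eq_lintegral_indicator_one_mul {X : Type*} [MeasurableSpace X]
    {μ : Measure X} {A : Set X} (hA : MeasurableSet A) (f : X → ℝ≥0∞) :
    ∫⁻ x in A, f x ∂μ = ∫⁻ x, A.indicator 1 x * f x ∂μ := by
  rw [← lintegral_indicator hA]
  congr 1 with x
  by_cases hx : x ∈ A <;> simp [hx]

namespace IsTransferOperator

variable {X : Type*} [MeasurableSpace X] {μ : Measure X} {T : X → X} {Y : Set X}
  {hatT : (X → ℝ≥0∞) → (X → ℝ≥0∞)}

theorem measurable_iterate (h : IsTransferOperator μ T hatT) {u : X → ℝ≥0∞}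
    (hu : Measurable u) (k : ℕ) : Measurable (hatT^[k] u) := by
  induction k generalizing u with
  | zero => exact hu
  | succ k ih => exact ih (h.measurable u hu)

theorem lintegral_comp_iterate_mul (h : IsTransferOperator μ T hatT) (hT : Measurable T)
    (k : ℕ) {u v : X → ℝ≥0∞} (hu : Measurable u) (hv : Measurable v) :
    ∫⁻ x, v (T^[k] x) * u x ∂μ = ∫⁻ x, v x * hatT^[k] u x ∂μ := by
  induction k generalizing u with
  | zero => rfl
  | succ k ih =>
    simp only [Function.iterate_succ_apply]
    exact (h.lintegral_comp_mul u (v ∘ T^[k]) hu (hv.comp (hT.iterate k))).trans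
      (ih (h.measurable u hu))

theorem setLIntegral_iterate (h : IsTransferOperator μ T hatT) (hT : Measurable T) (k : ℕ)
    {u : X → ℝ≥0∞} (hu : Measurable u) {A : Set X} (hA : MeasurableSet A) :
    ∫⁻ x in A, hatT^[k] u x ∂μ = ∫⁻ x in T^[k] ⁻¹' A, u x ∂μ := by
  rw [setLIntegral_eq_lintegral_indicator_one_mul hA,
    setLIntegral_eq_lintegral_indicator_one_mul (hT.iterate k hA),
    ← h.lintegral_comp_iterate_mul hT k hu (measurable_one.indicator hA)]
  rfl

theorem setLIntegral_le_of_ae_le_sum_iterate (h : IsTransferOperator μ T hatT)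
    (hT : Measurable T) {u v : X → ℝ≥0∞} (hu : Measurable u) {C : ℝ≥0∞} {K : ℕ}
    {A : Set X} (hA : MeasurableSet A)
    (hv : ∀ᵐ x ∂μ.restrict A, v x ≤ C * ∑ j ∈ Finset.range (K + 1), hatT^[j] u x) :
    ∫⁻ x in A, v x ∂μ ≤ C * ∑ j ∈ Finset.range (K + 1), ∫⁻ x in T^[j] ⁻¹' A, u x ∂μ := by
  calc ∫⁻ x in A, v x ∂μ
      ≤ ∫⁻ x in A, C * ∑ j ∈ Finset.range (K + 1), hatT^[j] u x ∂μ := lintegral_mono_ae hv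
    _ = C * ∑ j ∈ Finset.range (K + 1), ∫⁻ x in A, hatT^[j] u x ∂μ := by
      rw [lintegral_const_mul _ (Finset.measurable_sum _ fun j _ => h.measurable_iterate hu j),
        lintegral_finsetSum _ fun j _ => h.measurable_iterate hu j]
    _ = _ := by simp_rw [h.setLIntegral_iterate hT _ hu hA]

theorem setLIntegral_le_of_sweeping (h : IsTransferOperator μ T hatT) (hT : Measurable T)
    (hY : MeasurableSet Y) {G : X → ℝ≥0∞} {C : ℝ≥0∞} {K : ℕ}
    (hG : ∀ᵐ x ∂μ, G x ≤ C * ∑ j ∈ Finset.range (K + 1),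
      hatT^[j] (Y.indicator fun _ => (1 : ℝ≥0∞)) x)
    {A : Set X} (hA : MeasurableSet A) :
    ∫⁻ x in A, G x ∂μ ≤ C * ∑ j ∈ Finset.range (K + 1), μ (Y ∩ T^[j] ⁻¹' A) := by
  refine (h.setLIntegral_le_of_ae_le_sum_iterate hT (measurable_const.indicator hY) hA
    (ae_restrict_of_ae hG)).trans_eq ?_
  simp_rw [lintegral_indicator_const hY, one_mul, Measure.restrict_apply hY]

theorem setLIntegral_entrance (h : IsTransferOperator μ T hatT) (hT : Measurable T)
    (hY : MeasurableSet Y) (m : ℕ) {S : Set X} (hS : MeasurableSet S) :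
    ∫⁻ x in S, entrance T Y μ hatT m x ∂μ =
      (∑ k ∈ Finset.range m, μ (Ypart T Y k ∩ T^[k] ⁻¹' S)) / wrate T Y μ m := by
  have hmeas : ∀ k, Measurable (hatT^[k] ((Ypart T Y k).indicator fun _ => (1 : ℝ≥0∞))) :=
    fun k => h.measurable_iterate (measurable_const.indicator (measurableSet_Ypart hT hY k)) k
  simp_rw [entrance, div_eq_mul_inv]
  rw [lintegral_mul_const _ (Finset.measurable_sum _ fun k _ => hmeas k),
    lintegral_finsetSum _ fun k _ => hmeas k]
  congr 1
  refine Finset.sum_congr rfl fun k _ => ?_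
  rw [h.setLIntegral_iterate hT k (measurable_const.indicator (measurableSet_Ypart hT hY k)) hS,
    lintegral_indicator_const (measurableSet_Ypart hT hY k), one_mul,
    Measure.restrict_apply (measurableSet_Ypart hT hY k)]

theorem measure_le_of_entrance_sweeping (h : IsTransferOperator μ T hatT)
    (hT : Measurable T) (hY : MeasurableSet Y) {C : ℝ≥0∞} {K m : ℕ}
    (hsweep : ∀ᵐ x ∂μ.restrict Y,
      1 ≤ C * ∑ j ∈ Finset.range (K + 1), hatT^[j] (entrance T Y μ hatT m) x)
    {D : Set X} (hD : MeasurableSet D) (hDY : D ⊆ Y) :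
    μ D ≤ C * (∑ j ∈ Finset.range (K + 1),
      ∑ k ∈ Finset.range m, μ (Ypart T Y k ∩ T^[k] ⁻¹' (T^[j] ⁻¹' D))) / wrate T Y μ m := by
  have hent : Measurable (entrance T Y μ hatT m) :=
    (Finset.measurable_sum _ fun k _ => h.measurable_iterate
      (measurable_const.indicator (measurableSet_Ypart hT hY k)) k).div_const _
  calc μ D = ∫⁻ _ in D, 1 ∂μ := (setLIntegral_one D).symm
    _ ≤ C * ∑ j ∈ Finset.range (K + 1), ∫⁻ x in T^[j] ⁻¹' D, entrance T Y μ hatT m x ∂μ :=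
      h.setLIntegral_le_of_ae_le_sum_iterate hT hent hD
        (ae_restrict_of_ae_restrict_of_subset hDY hsweep)
    _ = _ := by
      simp only [h.setLIntegral_entrance hT hY m (hT.iterate _ hD), div_eq_mul_inv,
        Finset.sum_mul, mul_assoc]

end IsTransferOperator

/-- The sets on the left are pairwise disjoint and all lie in `⋃_{t < i + m + L} T^{-t} B`. -/
theorem sum_measure_inter_preimage_le {X : Type*} [MeasurableSpace X] {μ : Measure X}
    {T : X → X} (hT : MeasurePreserving T μ μ) {E D : ℕ → Set X}
    (hE : Pairwise (Function.onFun Disjoint E)) (hEm : ∀ k, MeasurableSet (E k))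
    (hD : Pairwise (Function.onFun Disjoint D)) (hDm : ∀ s, MeasurableSet (D s))
    {B : Set X} (hB : MeasurableSet B) {i m L : ℕ} (hDB : ∀ s < L, D s ⊆ T^[s] ⁻¹' B) :
    ∑ s ∈ Finset.range L, ∑ k ∈ Finset.range m, μ (E k ∩ T^[k] ⁻¹' (T^[i] ⁻¹' D s)) ≤
      (i + m + L : ℕ) * μ B := by
  set F : ℕ × ℕ → Set X := fun p => E p.2 ∩ T^[p.2] ⁻¹' (T^[i] ⁻¹' D p.1)
  have hF : Pairwise (Function.onFun Disjoint F) := by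
    intro p q hpq
    by_cases hk : p.2 = q.2
    · have hs : p.1 ≠ q.1 := fun hs => hpq (Prod.ext hs hk)
      refine (((hD hs).preimage _).preimage _).mono inter_subset_right ?_
      simp only [F, hk, inter_subset_right]
    · exact (hE hk).mono inter_subset_left inter_subset_left
  have hFB : ∀ p ∈ Finset.range L ×ˢ Finset.range m,
      F p ⊆ ⋃ t ∈ Finset.range (i + m + L), T^[t] ⁻¹' B := by
    intro p hp x hx
    simp only [Finset.mem_product, Finset.mem_range] at hp
    refine mem_biUnion (Finset.mem_range.mpr (by omega : p.1 + i + p.2 < i + m + L)) ?_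
    have := hDB p.1 hp.1 hx.2
    simpa only [mem_preimage, Function.iterate_add_apply] using this
  calc ∑ s ∈ Finset.range L, ∑ k ∈ Finset.range m, μ (E k ∩ T^[k] ⁻¹' (T^[i] ⁻¹' D s))
      = μ (⋃ p ∈ Finset.range L ×ˢ Finset.range m, F p) := by
        rw [measure_biUnion_finset (hF.set_pairwise _) fun p _ =>
          (hEm _).inter (hT.measurable.iterate _ (hT.measurable.iterate _ (hDm _))),
          Finset.sum_product]
    _ ≤ ∑ t ∈ Finset.range (i + m + L), μ (T^[t] ⁻¹' B) :=
        (measure_mono (iUnion₂_subset hFB)).trans (measure_biUnion_finset_le _ _)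
    _ = (i + m + L : ℕ) * μ B := by
        simp [(hT.iterate _).measure_preimage hB.nullMeasurableSet]

section LastVisit

variable {X : Type*} [MeasurableSpace X] {μ : Measure X} {T : X → X} {Y : Set X}
  {hatT : (X → ℝ≥0∞) → (X → ℝ≥0∞)}

theorem measure_inter_preimage_lastVisit_le (hTm : MeasurePreserving T μ μ)
    (h : IsTransferOperator μ T hatT) (hY : MeasurableSet Y) {C : ℝ≥0∞} {K M : ℕ}
    (hsweep : ∀ᵐ x ∂μ.restrict Y,
      1 ≤ C * ∑ j ∈ Finset.range (K + 1), hatT^[j] (entrance T Y μ hatT (M + 1)) x)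
    (j n : ℕ) :
    μ (Y ∩ T^[j] ⁻¹' {x | lastVisit T Y n x ≤ M}) ≤
      C * (K + 1) * (2 * M + K + j + 2) *
        μ (Y ∩ {x | ((n - M : ℕ) : ℕ∞) < firstReturn T Y x}) / wrate T Y μ (M + 1) := by
  have hT := hTm.measurable
  set B := Y ∩ {x | ((n - M : ℕ) : ℕ∞) < firstReturn T Y x}
  set D : ℕ → Set X := fun s => Y ∩ lastVisit T Y (j + n) ⁻¹' {s}
  have hDm : ∀ s, MeasurableSet (D s) := fun s =>
    hY.inter (measurable_lastVisit hT hY _ (measurableSet_singleton s))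
  have hD : Pairwise (Function.onFun Disjoint D) := fun s s' hss' =>
    disjoint_left.mpr fun x hx hx' => hss' (hx.2.symm.trans hx'.2)
  have hDB : ∀ s < j + M + 1, D s ⊆ T^[s] ⁻¹' B := fun s hs =>
    inter_lastVisit_eq_subset (by omega)
  calc μ (Y ∩ T^[j] ⁻¹' {x | lastVisit T Y n x ≤ M})
      ≤ ∑ s ∈ Finset.range (j + M + 1), μ (D s) :=
        (measure_mono (inter_preimage_lastVisit_le_subset j n M)).trans
          (measure_biUnion_finset_le _ _)
    _ ≤ ∑ s ∈ Finset.range (j + M + 1), C * (∑ j' ∈ Finset.range (K + 1),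
          ∑ k ∈ Finset.range (M + 1), μ (Ypart T Y k ∩ T^[k] ⁻¹' (T^[j'] ⁻¹' D s))) /
            wrate T Y μ (M + 1) :=
        Finset.sum_le_sum fun s _ =>
          h.measure_le_of_entrance_sweeping hT hY hsweep (hDm s) inter_subset_left
    _ = C * (∑ j' ∈ Finset.range (K + 1), ∑ s ∈ Finset.range (j + M + 1),
          ∑ k ∈ Finset.range (M + 1), μ (Ypart T Y k ∩ T^[k] ⁻¹' (T^[j'] ⁻¹' D s))) /
            wrate T Y μ (M + 1) := by
        simp only [div_eq_mul_inv, ← Finset.sum_mul, ← Finset.mul_sum]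
        rw [Finset.sum_comm]
    _ ≤ C * (∑ j' ∈ Finset.range (K + 1), ((j' + (M + 1) + (j + M + 1) : ℕ) : ℝ≥0∞) * μ B) /
            wrate T Y μ (M + 1) := by
        gcongr with j' hj'
        exact sum_measure_inter_preimage_le hTm pairwise_disjoint_Ypart
          (measurableSet_Ypart hT hY) hD hDm
          (hY.inter (measurableSet_natCast_lt_firstReturn hT hY _)) hDB
    _ ≤ C * (∑ _j' ∈ Finset.range (K + 1), ((2 * M + K + j + 2 : ℕ) : ℝ≥0∞) * μ B) /
            wrate T Y μ (M + 1) := by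
        gcongr C * ?_ / _
        refine Finset.sum_le_sum fun j' hj' => mul_le_mul_left ?_ _
        have := Finset.mem_range.mp hj'
        exact_mod_cast (by omega : j' + (M + 1) + (j + M + 1) ≤ 2 * M + K + j + 2)
    _ = _ := by
        rw [Finset.sum_const, Finset.card_range, nsmul_eq_mul, ← mul_assoc, ← mul_assoc]
        push_cast
        ring

theorem setLIntegral_lastVisit_le_le (hTm : MeasurePreserving T μ μ)
    (h : IsTransferOperator μ T hatT) (hY : MeasurableSet Y) {C C' : ℝ≥0∞} {K K' M : ℕ}
    (hsweep : ∀ᵐ x ∂μ.restrict Y,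
      1 ≤ C * ∑ j ∈ Finset.range (K + 1), hatT^[j] (entrance T Y μ hatT (M + 1)) x)
    {G : X → ℝ≥0∞} (hG : ∀ᵐ x ∂μ, G x ≤ C' * ∑ j ∈ Finset.range (K' + 1),
      hatT^[j] (Y.indicator fun _ => (1 : ℝ≥0∞)) x)
    {n : ℕ} (hMn : M < n) :
    ∫⁻ x in {x | lastVisit T Y n x ≤ M}, G x ∂μ ≤ C' * C * (K' + 1) * (K + 1) *
      ((2 * M + K + K' + 2 : ℕ) * (wrate T Y μ n / (n - M : ℕ)) / wrate T Y μ (M + 1)) := by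
  have hB : μ (Y ∩ {x | ((n - M : ℕ) : ℕ∞) < firstReturn T Y x}) ≤
      wrate T Y μ n / (n - M : ℕ) := by
    rw [ENNReal.le_div_iff_mul_le (Or.inl (Nat.cast_ne_zero.mpr (by omega)))
      (Or.inl (ENNReal.natCast_ne_top _)), mul_comm]
    exact (natCast_mul_measure_le_wrate (n - M)).trans (wrate_mono (Nat.sub_le n M))
  calc ∫⁻ x in {x | lastVisit T Y n x ≤ M}, G x ∂μ
      ≤ C' * ∑ j ∈ Finset.range (K' + 1), μ (Y ∩ T^[j] ⁻¹' {x | lastVisit T Y n x ≤ M}) :=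
        h.setLIntegral_le_of_sweeping hTm.measurable hY hG
          (measurable_lastVisit hTm.measurable hY n measurableSet_Iic)
    _ ≤ C' * ∑ _j ∈ Finset.range (K' + 1), C * (K + 1) * (2 * M + K + K' + 2 : ℕ) *
          (wrate T Y μ n / (n - M : ℕ)) / wrate T Y μ (M + 1) := by
        gcongr C' * ?_
        refine Finset.sum_le_sum fun j hj => (measure_inter_preimage_lastVisit_le hTm h hY
          hsweep j n).trans ?_
        have := Finset.mem_range.mp hj
        gcongr
        exact_mod_cast (by omega : 2 * M + K + j + 2 ≤ 2 * M + K + K' + 2)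
    _ = _ := by
        rw [Finset.sum_const, Finset.card_range, nsmul_eq_mul]
        simp only [div_eq_mul_inv]
        push_cast
        ring

theorem ofReal_mul_setLIntegral_lastVisit_le_le (hTm : MeasurePreserving T μ μ)
    (h : IsTransferOperator μ T hatT) (hY : MeasurableSet Y) {C C' : ℝ≥0∞} {K K' M : ℕ}
    (hsweep : ∀ᵐ x ∂μ.restrict Y,
      1 ≤ C * ∑ j ∈ Finset.range (K + 1), hatT^[j] (entrance T Y μ hatT (M + 1)) x)
    {G : X → ℝ≥0∞} (hG : ∀ᵐ x ∂μ, G x ≤ C' * ∑ j ∈ Finset.range (K' + 1),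
      hatT^[j] (Y.indicator fun _ => (1 : ℝ≥0∞)) x)
    {n : ℕ} (hMn : M < n) (hwn : 0 < (wrate T Y μ n).toReal)
    (hwM : 0 < (wrate T Y μ (M + 1)).toReal) {ρ r : ℝ}
    (hρ : ρ * ((2 * M + K + K' + 2 : ℕ) * ((wrate T Y μ n).toReal / (n - M : ℕ)) /
      (wrate T Y μ (M + 1)).toReal) ≤ r) :
    ENNReal.ofReal ρ * ∫⁻ x in {x | lastVisit T Y n x ≤ M}, G x ∂μ ≤
      C' * C * (K' + 1) * (K + 1) * ENNReal.ofReal r := by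
  set q := (2 * M + K + K' + 2 : ℕ) * (wrate T Y μ n / (n - M : ℕ)) / wrate T Y μ (M + 1)
  have hq : q ≠ ⊤ := ENNReal.div_ne_top (ENNReal.mul_ne_top (ENNReal.natCast_ne_top _)
    (ENNReal.div_ne_top (ENNReal.toReal_pos_iff.mp hwn).2.ne (Nat.cast_ne_zero.mpr (by omega))))
    (ENNReal.toReal_pos_iff.mp hwM).1.ne'
  have hρq : ENNReal.ofReal ρ * q ≤ ENNReal.ofReal r := by
    rw [← ENNReal.ofReal_toReal hq, ← ENNReal.ofReal_mul' ENNReal.toReal_nonneg]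
    refine ENNReal.ofReal_le_ofReal (le_of_eq_of_le ?_ hρ)
    simp only [q, ENNReal.toReal_div, ENNReal.toReal_mul, ENNReal.toReal_natCast]
  calc ENNReal.ofReal ρ * ∫⁻ x in {x | lastVisit T Y n x ≤ M}, G x ∂μ
      ≤ ENNReal.ofReal ρ * (C' * C * (K' + 1) * (K + 1) * q) := by
        gcongr
        exact setLIntegral_lastVisit_le_le hTm h hY hsweep hG hMn
    _ = C' * C * (K' + 1) * (K + 1) * (ENNReal.ofReal ρ * q) := by ring
    _ ≤ C' * C * (K' + 1) * (K + 1) * ENNReal.ofReal r := by gcongr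

end LastVisit

section SlowVariation

/-- Steinhaus-type argument: once `V N ∩ [0, 2]` has measure `> 3/2`, it meets each of its
translates by `u ∈ [0, 1]` inside `[0, 3]`. -/
theorem exists_forall_mem_sub_mem {V : ℕ → Set ℝ} (hVm : ∀ N, MeasurableSet (V N))
    (hV : Monotone V) (hcover : Icc (0 : ℝ) 2 ⊆ ⋃ N, V N) :
    ∃ N, ∀ u ∈ Icc (0 : ℝ) 1, ∃ v ∈ V N, v - u ∈ V N := by
  set W : ℕ → Set ℝ := fun N => V N ∩ Icc 0 2
  have hlim : Tendsto (volume ∘ W) atTop (𝓝 (volume (Icc (0 : ℝ) 2))) := by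
    have := tendsto_measure_iUnion_atTop (μ := volume) fun a b hab =>
      inter_subset_inter_left (Icc (0 : ℝ) 2) (hV hab)
    rwa [← iUnion_inter, inter_eq_right.mpr hcover] at this
  have hhalf : ENNReal.ofReal (3 / 2) < volume (Icc (0 : ℝ) 2) := by
    rw [Real.volume_Icc]
    exact ENNReal.ofReal_lt_ofReal_iff'.mpr ⟨by norm_num, by norm_num⟩
  obtain ⟨N, hN⟩ := (hlim.eventually (eventually_gt_nhds hhalf)).exists
  refine ⟨N, fun u hu => ?_⟩
  have hWm : MeasurableSet (W N) := (hVm N).inter measurableSet_Icc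
  have hsub : W N ⊆ Icc 0 3 := fun v hv => ⟨hv.2.1, by linarith [hv.2.2]⟩
  have hsub' : (· - u) ⁻¹' W N ⊆ Icc 0 3 := fun v hv =>
    ⟨by linarith [hv.2.1, hu.1], by linarith [hv.2.2, hu.2]⟩
  have hvol : volume ((· - u) ⁻¹' W N) = volume (W N) := by
    simp [sub_eq_add_neg]
  obtain ⟨v, hv, hvu⟩ := nonempty_inter_of_measure_lt_add' volume hWm hsub hsub' (by
    rw [hvol, Real.volume_Icc, show (3 : ℝ) - 0 = 3 / 2 + 3 / 2 by norm_num,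
      ENNReal.ofReal_add (by norm_num) (by norm_num)]
    exact ENNReal.add_lt_add hN hN)
  exact ⟨v, hv.1, hvu.1⟩

theorem eventually_abs_log_sub_log_le_one {ℓ : ℝ → ℝ} (hℓpos : ∀ t, 0 < t → 0 < ℓ t)
    (hℓsv : ∀ lam : ℝ, 0 < lam → Tendsto (fun t => ℓ (lam * t) / ℓ t) atTop (𝓝 1))
    {w : ℕ → ℝ} (hw : Tendsto w atTop atTop) (v : ℝ) :
    ∀ᶠ n in atTop, |log (ℓ (exp v * w n)) - log (ℓ (w n))| ≤ 1 := by
  have hlog := ((continuousAt_log one_ne_zero).tendsto.comp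
    ((hℓsv _ (exp_pos v)).comp hw)).abs
  rw [log_one, abs_zero] at hlog
  filter_upwards [hw.eventually_gt_atTop 0, hlog.eventually_lt_const one_pos] with n hn hlt
  rw [Function.comp_apply, Function.comp_apply,
    log_div (hℓpos _ (by positivity)).ne' (hℓpos _ hn).ne'] at hlt
  exact hlt.le

theorem eventually_le_exp_two_mul_of_tendsto {ℓ : ℝ → ℝ} (hℓmeas : Measurable ℓ)
    (hℓpos : ∀ t, 0 < t → 0 < ℓ t)
    (hℓsv : ∀ lam : ℝ, 0 < lam → Tendsto (fun t => ℓ (lam * t) / ℓ t) atTop (𝓝 1))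
    {t s : ℕ → ℝ} (ht : Tendsto t atTop atTop) (htpos : ∀ n, 0 < t n) (hts : ∀ n, t n ≤ s n)
    (hst : ∀ n, s n ≤ 2 * t n) :
    ∀ᶠ n in atTop, ℓ (t n) ≤ exp 2 * ℓ (s n) := by
  set g : ℝ → ℝ → ℝ := fun w v => log (ℓ (exp v * w)) - log (ℓ w)
  have hgm : ∀ w, Measurable (g w) := fun w =>
    (measurable_log.comp (hℓmeas.comp (measurable_exp.mul_const w))).sub_const _
  set V : ℕ → Set ℝ := fun N => ⋂ n ≥ N, {v | |g (t n) v| ≤ 1} ∩ {v | |g (s n) v| ≤ 1}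
  have hVm : ∀ N, MeasurableSet (V N) := fun N =>
    MeasurableSet.iInter fun n => MeasurableSet.iInter fun _ =>
      (measurableSet_le (hgm _).abs measurable_const).inter
        (measurableSet_le (hgm _).abs measurable_const)
  have hV : Monotone V := fun a b hab =>
    biInter_mono (fun n hn => le_trans hab hn) fun _ _ => le_rfl
  have hcover : Icc (0 : ℝ) 2 ⊆ ⋃ N, V N := fun v _ => by
    obtain ⟨N, hN⟩ := eventually_atTop.mp
      ((eventually_abs_log_sub_log_le_one hℓpos hℓsv ht v).and
        (eventually_abs_log_sub_log_le_one hℓpos hℓsv (tendsto_atTop_mono hts ht) v))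
    exact mem_iUnion.mpr ⟨N, mem_iInter₂.mpr hN⟩
  obtain ⟨N, hN⟩ := exists_forall_mem_sub_mem hVm hV hcover
  filter_upwards [eventually_ge_atTop N] with n hn
  have hspos : 0 < s n := (htpos n).trans_le (hts n)
  set u := log (s n / t n)
  have hu : u ∈ Icc (0 : ℝ) 1 := by
    refine ⟨log_nonneg ((one_le_div (htpos n)).mpr (hts n)), ?_⟩
    calc u ≤ log 2 := log_le_log (div_pos hspos (htpos n)) ((div_le_iff₀ (htpos n)).mpr (hst n))
      _ ≤ 1 := by linarith [log_two_lt_d9]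
  obtain ⟨v, hv, hvu⟩ := hN u hu
  have h1 := (mem_iInter₂.mp hv n hn).1
  have h2 := (mem_iInter₂.mp hvu n hn).2
  -- both `log ℓ (t n)` and `log ℓ (s n)` are within `1` of `log ℓ (exp v * t n)`
  have he : exp (v - u) * s n = exp v * t n := by
    rw [exp_sub, exp_log (div_pos hspos (htpos n))]
    field_simp
  simp only [mem_ofPred_eq, g, he] at h1 h2
  rw [← log_le_log_iff (hℓpos _ (htpos n)) (by have := hℓpos _ hspos; positivity),
    log_mul (exp_pos 2).ne' (hℓpos _ hspos).ne', log_exp]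
  linarith [abs_le.mp h1, abs_le.mp h2]

theorem eventually_forall_le_exp_two_mul {ℓ : ℝ → ℝ} (hℓmeas : Measurable ℓ)
    (hℓpos : ∀ t, 0 < t → 0 < ℓ t)
    (hℓsv : ∀ lam : ℝ, 0 < lam → Tendsto (fun t => ℓ (lam * t) / ℓ t) atTop (𝓝 1)) :
    ∀ᶠ t in atTop, ∀ s, t ≤ s → s ≤ 2 * t → ℓ t ≤ exp 2 * ℓ s := by
  by_contra hcon
  simp only [not_eventually, frequently_atTop, not_forall, not_le] at hcon
  choose t ht s hts hst hlt using fun n : ℕ => hcon (n + 1)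
  have htop : Tendsto t atTop atTop :=
    tendsto_atTop_mono ht (tendsto_atTop_add_const_right _ 1 tendsto_natCast_atTop_atTop)
  obtain ⟨n, hn⟩ := (eventually_le_exp_two_mul_of_tendsto hℓmeas hℓpos hℓsv htop
    (fun n => by linarith [ht n, (n.cast_nonneg : (0 : ℝ) ≤ n)]) hts hst).exists
  exact (hlt n).not_ge hn

end SlowVariation

theorem ratio_mul_le_of_bounds {α c n t m ℓt ℓn ℓm Wn Wm e q : ℝ} (hα : α ≤ 1) (hc : 0 < c)
    (hn : 0 < n) (ht : t = c * n) (htm : t ≤ m) (hℓn : 0 < ℓn) (hℓm : 0 < ℓm)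
    (hℓ : ℓt ≤ exp 2 * ℓm) (he0 : 0 ≤ e) (he : e ≤ 3 * t) (hq : n ≤ 2 * q) (hWn0 : 0 ≤ Wn)
    (hWn : Wn ≤ 2 * (n ^ (1 - α) * ℓn)) (hWm : m ^ (1 - α) * ℓm ≤ 2 * Wm) :
    ℓt / (c ^ α * ℓn) * (e * (Wn / q) / Wm) ≤ 24 * exp 2 := by
  have ht0 : 0 < t := ht ▸ mul_pos hc hn
  have hq0 : 0 < q := by linarith
  have hm0 : 0 < m := ht0.trans_le htm
  have hWm0 : 0 < Wm := by
    have : 0 < m ^ (1 - α) * ℓm := by positivity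
    linarith
  have hsplit : c = c ^ α * c ^ (1 - α) := by rw [← rpow_add hc]; simp
  have hcore : t * n ^ (1 - α) ≤ c ^ α * n * m ^ (1 - α) :=
    calc t * n ^ (1 - α) = c ^ α * n * t ^ (1 - α) := by
          rw [ht, mul_rpow hc.le hn.le]
          nth_rewrite 1 [hsplit]
          ring
      _ ≤ c ^ α * n * m ^ (1 - α) := by gcongr
  have hfrac : ℓt / (c ^ α * ℓn) * (e * (Wn / q) / Wm) =
      ℓt * (e * Wn) / (c ^ α * ℓn * (q * Wm)) := by
    field_simp
  rw [hfrac, div_le_iff₀ (by positivity)]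
  calc ℓt * (e * Wn)
      ≤ (exp 2 * ℓm) * (3 * t * (2 * (n ^ (1 - α) * ℓn))) := by gcongr
    _ = 6 * exp 2 * ℓm * ℓn * (t * n ^ (1 - α)) := by ring
    _ ≤ 6 * exp 2 * ℓm * ℓn * (c ^ α * n * m ^ (1 - α)) := by gcongr
    _ = 24 * exp 2 * (c ^ α * ℓn * (n / 2 * (m ^ (1 - α) * ℓm / 2))) := by ring
    _ ≤ 24 * exp 2 * (c ^ α * ℓn * (q * Wm)) := by gcongr <;> linarith

theorem eventually_ratio_mul_le {α : ℝ} (hα : α ≤ 1) {ℓ : ℝ → ℝ} (hℓmeas : Measurable ℓ)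
    (hℓpos : ∀ t, 0 < t → 0 < ℓ t)
    (hℓsv : ∀ lam : ℝ, 0 < lam → Tendsto (fun t => ℓ (lam * t) / ℓ t) atTop (𝓝 1))
    {W : ℕ → ℝ} (hW0 : ∀ n, 0 ≤ W n)
    (hW : Tendsto (fun n : ℕ => W n / ((n : ℝ) ^ (1 - α) * ℓ n)) atTop (𝓝 1))
    {c : ℕ → ℝ} (hc : Tendsto c atTop (𝓝 0)) (hct : Tendsto (fun n : ℕ => c n * n) atTop atTop)
    (K : ℕ) :
    ∀ᶠ n : ℕ in atTop, ℓ (c n * n) / (c n ^ α * ℓ n) *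
      ((2 * ⌊c n * n⌋₊ + K + 2 : ℕ) * (W n / (n - ⌊c n * n⌋₊ : ℕ)) / W (⌊c n * n⌋₊ + 1)) ≤
        24 * exp 2 := by
  have hM : Tendsto (fun n => ⌊c n * n⌋₊ + 1) atTop atTop :=
    tendsto_atTop_mono (fun n => Nat.le_succ _) (tendsto_nat_floor_atTop.comp hct)
  filter_upwards [hct.eventually (eventually_forall_le_exp_two_mul hℓmeas hℓpos hℓsv),
    hct.eventually_ge_atTop (K + 2 : ℝ), hc.eventually (eventually_lt_nhds one_half_pos),
    hW.eventually (eventually_lt_nhds one_lt_two),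
    (hW.comp hM).eventually (eventually_gt_nhds one_half_lt_one)] with n hℓ htK hc2 hWn hWm
  set t := c n * n
  set M := ⌊t⌋₊
  have ht0 : 0 < t := by linarith
  have hn : 0 < (n : ℝ) := Nat.cast_pos.mpr (Nat.pos_of_ne_zero fun h => by simp [t, h] at ht0)
  have hc0 : 0 < c n := pos_of_mul_pos_left ht0 hn.le
  have hMt : (M : ℝ) ≤ t := Nat.floor_le ht0.le
  have htM : t ≤ ((M + 1 : ℕ) : ℝ) := by push_cast; exact (Nat.lt_floor_add_one t).le
  have htn : t ≤ n := by nlinarith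
  have hMn : M ≤ n := Nat.cast_le.mp (hMt.trans htn)
  simp only [Function.comp_apply] at hWm
  refine ratio_mul_le_of_bounds hα hc0 hn rfl htM (hℓpos _ hn) (hℓpos _ (ht0.trans_le htM))
    (hℓ _ htM (by push_cast; linarith)) (Nat.cast_nonneg _) (by push_cast; linarith)
    (by push_cast [hMn]; nlinarith) (hW0 n) ?_ ?_
  · have hd : 0 < (n : ℝ) ^ (1 - α) * ℓ n := mul_pos (rpow_pos_of_pos hn _) (hℓpos _ hn)
    exact ((div_lt_iff₀ hd).mp hWn).le
  · have hd : 0 < ((M + 1 : ℕ) : ℝ) ^ (1 - α) * ℓ (M + 1 : ℕ) :=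
      mul_pos (rpow_pos_of_pos (ht0.trans_le htM) _) (hℓpos _ (ht0.trans_le htM))
    linarith [(lt_div_iff₀ hd).mp hWm]

theorem stmt17_general {X : Type*} [MeasurableSpace X] {μ : Measure X}
    {T : X → X} (herg : Ergodic T μ)
    {Y : Set X} (hYm : MeasurableSet Y)
    (hatT : (X → ℝ≥0∞) → (X → ℝ≥0∞))
    (hatTmeas : ∀ u, Measurable u → Measurable (hatT u))
    (hatTdual : ∀ u v : X → ℝ≥0∞, Measurable u → Measurable v →
      ∫⁻ x, v (T x) * u x ∂μ = ∫⁻ x, v x * hatT u x ∂μ)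
    (α : ℝ) (hα : α ∈ Set.Ioo (0:ℝ) 1)
    (ℓ : ℝ → ℝ) (hℓmeas : Measurable ℓ) (hℓpos : ∀ t, 0 < t → 0 < ℓ t)
    (hℓsv : ∀ lam : ℝ, 0 < lam → Tendsto (fun t => ℓ (lam * t) / ℓ t) atTop (𝓝 1))
    -- (A2): `w_n^Y ~ n^{1-α} ℓ(n)`
    (hw : Tendsto (fun n : ℕ => (wrate T Y μ n).toReal / ((n : ℝ) ^ (1 - α) * ℓ n))
      atTop (𝓝 1))
    -- (A3): uniform sweeping of the entrance densities for `1_Y`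
    (hA3 : ∃ (N : ℕ) (C : ℝ≥0∞) (K : ℕ), C ≠ ⊤ ∧ ∀ n : ℕ, N ≤ n →
      ∀ᵐ x ∂μ.restrict Y,
        1 ≤ C * ∑ j ∈ Finset.range (K + 1), (hatT^[j] (entrance T Y μ hatT n)) x)
    (G : X → ℝ≥0∞)
    -- `1_Y` is uniformly sweeping for `G`
    (hGsweep : ∃ (C : ℝ≥0∞) (K : ℕ), C ≠ ⊤ ∧ ∀ᵐ x ∂μ,
      G x ≤ C * ∑ j ∈ Finset.range (K + 1),
        (hatT^[j] (Y.indicator fun _ => (1:ℝ≥0∞))) x) :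
    ∃ C2 : ℝ≥0∞, C2 ≠ ⊤ ∧
      ∀ c : ℕ → ℝ, (∀ n, 0 < c n) → Tendsto c atTop (𝓝 0) →
        Tendsto (fun n : ℕ => c n * n) atTop atTop →
        Filter.atTop.limsup (fun n : ℕ =>
          ENNReal.ofReal (ℓ (c n * n) / ((c n) ^ α * ℓ n)) *
            ∫⁻ x in {x | (lastVisit T Y n x : ℝ) ≤ c n * n}, G x ∂μ) ≤ C2 := by
  obtain ⟨N, C, K, hC, hA3⟩ := hA3
  obtain ⟨C', K', hC', hG⟩ := hGsweep
  have hT : MeasurePreserving T μ μ := herg.toMeasurePreserving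
  have hTO : IsTransferOperator μ T hatT := ⟨hatTmeas, hatTdual⟩
  have hwpos : ∀ᶠ n in atTop, 0 < (wrate T Y μ n).toReal := by
    filter_upwards [hw.eventually_ne one_ne_zero] with n hn
    exact ENNReal.toReal_nonneg.lt_of_ne' fun h0 => hn (by simp [h0])
  refine ⟨C' * C * (K' + 1) * (K + 1) * ENNReal.ofReal (24 * exp 2), by finiteness,
    fun c _ hc hct => limsup_le_of_le (by isBoundedDefault) ?_⟩
  have hM : Tendsto (fun n => ⌊c n * n⌋₊ + 1) atTop atTop :=
    tendsto_atTop_mono (fun n => Nat.le_succ _) (tendsto_nat_floor_atTop.comp hct)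
  filter_upwards [eventually_ratio_mul_le hα.2.le hℓmeas hℓpos hℓsv
      (fun _ => ENNReal.toReal_nonneg) hw hc hct (K + K'),
    hct.eventually_ge_atTop N, hc.eventually (eventually_lt_nhds one_pos),
    eventually_ge_atTop 1, hwpos, hM.eventually hwpos] with n hρ hN hc1 hn hwn hwM
  set M := ⌊c n * n⌋₊
  have ht0 : 0 ≤ c n * n := N.cast_nonneg.trans hN
  have hMn : M < n := by
    have : c n * n < n := mul_lt_of_lt_one_left (by exact_mod_cast hn) hc1
    exact_mod_cast (Nat.floor_le ht0).trans_lt this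
  have hNM : N ≤ M + 1 := by exact_mod_cast hN.trans (Nat.lt_floor_add_one (c n * n)).le
  have hset : {x | (lastVisit T Y n x : ℝ) ≤ c n * n} = {x | lastVisit T Y n x ≤ M} := by
    ext x
    exact (Nat.le_floor_iff ht0).symm
  rw [hset]
  exact ofReal_mul_setLIntegral_lastVisit_le_le hT hTO hYm (hA3 _ hNM) hG hMn hwn hwM
    (by simpa only [add_assoc] using hρ)

/-- Upper large deviation estimate for `μ_G(Z_n^Y/n ≤ c(n))` without assuming
existence of the asymptotic entrance density. -/
theorem stmt17 {X : Type*} [MeasurableSpace X] {μ : Measure X} [SigmaFinite μ]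
    {T : X → X} (hcons : Conservative T μ) (herg : Ergodic T μ)
    (hinf : μ Set.univ = ⊤) {Y : Set X} (hYm : MeasurableSet Y)
    (hY0 : 0 < μ Y) (hY1 : μ Y < ⊤)
    (hatT : (X → ℝ≥0∞) → (X → ℝ≥0∞))
    (hatTmeas : ∀ u, Measurable u → Measurable (hatT u))
    (hatTdual : ∀ u v : X → ℝ≥0∞, Measurable u → Measurable v →
      ∫⁻ x, v (T x) * u x ∂μ = ∫⁻ x, v x * hatT u x ∂μ)
    (α : ℝ) (hα : α ∈ Set.Ioo (0:ℝ) 1)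
    (ℓ : ℝ → ℝ) (hℓmeas : Measurable ℓ) (hℓpos : ∀ t, 0 < t → 0 < ℓ t)
    (hℓsv : ∀ lam : ℝ, 0 < lam → Tendsto (fun t => ℓ (lam * t) / ℓ t) atTop (𝓝 1))
    -- (A2): `w_n^Y ~ n^{1-α} ℓ(n)`
    (hw : Tendsto (fun n : ℕ => (wrate T Y μ n).toReal / ((n : ℝ) ^ (1 - α) * ℓ n))
      atTop (𝓝 1))
    -- (A3): uniform sweeping of the entrance densities for `1_Y`
    (hA3 : ∃ (N : ℕ) (C : ℝ≥0∞) (K : ℕ), C ≠ ⊤ ∧ ∀ n : ℕ, N ≤ n →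
      ∀ᵐ x ∂μ.restrict Y,
        1 ≤ C * ∑ j ∈ Finset.range (K + 1), (hatT^[j] (entrance T Y μ hatT n)) x)
    (G : X → ℝ≥0∞) (hGmeas : Measurable G) (hGint : ∫⁻ x, G x ∂μ < ⊤)
    -- `1_Y` is uniformly sweeping for `G`
    (hGsweep : ∃ (C : ℝ≥0∞) (K : ℕ), C ≠ ⊤ ∧ ∀ᵐ x ∂μ,
      G x ≤ C * ∑ j ∈ Finset.range (K + 1),
        (hatT^[j] (Y.indicator fun _ => (1:ℝ≥0∞))) x) :
    ∃ C2 : ℝ≥0∞, C2 ≠ ⊤ ∧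
      ∀ c : ℕ → ℝ, (∀ n, 0 < c n) → Tendsto c atTop (𝓝 0) →
        Tendsto (fun n : ℕ => c n * n) atTop atTop →
        Filter.atTop.limsup (fun n : ℕ =>
          ENNReal.ofReal (ℓ (c n * n) / ((c n) ^ α * ℓ n)) *
            ∫⁻ x in {x | (lastVisit T Y n x : ℝ) ≤ c n * n}, G x ∂μ) ≤ C2 :=
  stmt17_general herg hYm hatT hatTmeas hatTdual α hα ℓ hℓmeas hℓpos hℓsv hw hA3 G hGsweep
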